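/- Assume Hypothesis 3/2 (with the Camina–Zieschang data from the context), and set A = gcd(k₁−1, v₁−1). Then: (1) there is an integer z ≥ 1 with v₀ = (z(k₀−1)+1)·k₀; (2) (v₀−1)/(k₀−1) = z·k₀ + 1; (3) k₁ = A(z(k₀−1)+1)+1 and v₁ = A(zk₀+1)+1, equivalently k₁ − 1 = A·(v₀/k₀) and v₁ − 1 = A·(v₀−1)/(k₀−1); (4) λ ≥ (k₀−1)A + 1, and in particular either λ > k₀, or λ = k₀ and A = 1. -/

import Mathlib

/-! Counting flags inside a class gives `r (k₀ - 1) = λ (v₀ - 1)`, so with `r = λ m` we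
get `v₀ - 1 = m (k₀ - 1)`. Since `λ` is squarefree, `λ₁ k₀² η = v₀² λ` forces `v₀ = k₀ x`, and
then `λ₁ η = λ x²`. Counting the blocks that meet a fixed class, once through its points and
once through the other classes (in `D₁`), gives `m (k₁ - 1) = x (v₁ - 1)`. As
`x k₀ = m (k₀ - 1) + 1`, the numbers `x` and `m` are coprime, whence `k₁ - 1 = A x`,
`v₁ - 1 = A m`, `x = z (k₀ - 1) + 1` and `m = z k₀ + 1`; here `z ≥ 1` because `λ < r`.
Finally Fisher's inequality `v ≤ b` gives `k ≤ r = λ m`, while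
`k = k₀ (A x + 1) = (k₀ - 1) A m + A + k₀`, so `(k₀ - 1) A < λ`. -/

open Finset

namespace FlagTransitivePaper

/-- A nontrivial 2-design `D` (point set `P`, blocks indexed by `ι`, the block `i`
having point set `blk i`) with parameters `(v, k, λ)`, replication number `r` and `b`
blocks, together with a group `G` acting on points and blocks as a flag-transitive
automorphism group of `D`, preserving a nontrivial partition `Σ` of `P` into `v₁`
classes of size `v₀`; the partition is encoded by the class map `proj : P → Q`, where
`Q` is the set of classes.  The structure also records the Camina–Zieschang data:
the constant `k₀` (every block meets every class in `0` or `k₀` points), `k₁ = k/k₀`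
(the constant number of classes met by a block, i.e. the size of the trace of a
block on `Σ`), the constant `μ` (the number of blocks inducing a given nonempty
trace on a given class) and the constant `η` (the number of blocks having a given
trace on `Σ`), as well as the parameters `λ₁` and `r₁` of the quotient structure
`D₁` (these are constrained only via `Hyp32`, i.e. when `D₁` is a 2-design). -/
structure Setting (P ι Q G : Type*) [Fintype P] [DecidableEq P] [Fintype ι]
    [Fintype Q] [DecidableEq Q] [Group G] [MulAction G P] [MulAction G ι]
    [MulAction G Q] where
  /-- the set of points of a block -/
  blk : ι → Finset P
  /-- the map sending a point to its class in the partition `Σ` -/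
  proj : P → Q
  v : ℕ
  k : ℕ
  lam : ℕ
  r : ℕ
  b : ℕ
  v₀ : ℕ
  v₁ : ℕ
  k₀ : ℕ
  k₁ : ℕ
  μ : ℕ
  η : ℕ
  lam₁ : ℕ
  r₁ : ℕ
  card_points : Fintype.card P = v
  card_blocks : Fintype.card ι = b
  two_lt_k : 2 < k
  k_lt_v : k < v
  blk_card : ∀ i : ι, (blk i).card = k
  pair_count : ∀ x y : P, x ≠ y →
    (univ.filter fun i : ι => x ∈ blk i ∧ y ∈ blk i).card = lam
  rep_count : ∀ x : P, (univ.filter fun i : ι => x ∈ blk i).card = r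
  smul_blk : ∀ (g : G) (i : ι), blk (g • i) = (blk i).image fun x => g • x
  flag_trans : ∀ (x : P) (i : ι), x ∈ blk i → ∀ (y : P) (j : ι), y ∈ blk j →
    ∃ g : G, g • x = y ∧ g • i = j
  proj_equivariant : ∀ (g : G) (x : P), proj (g • x) = g • proj x
  fiber_card : ∀ q : Q, (univ.filter fun x : P => proj x = q).card = v₀
  card_classes : Fintype.card Q = v₁
  one_lt_v₀ : 1 < v₀
  one_lt_v₁ : 1 < v₁
  two_le_k₀ : 2 ≤ k₀
  k₀_mul_k₁ : k₀ * k₁ = k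
  blk_fiber_card : ∀ (i : ι) (q : Q),
    ((blk i).filter fun x => proj x = q).card = 0 ∨
      ((blk i).filter fun x => proj x = q).card = k₀
  trace_card : ∀ i : ι,
    (univ.filter fun q : Q => ((blk i).filter fun x => proj x = q).Nonempty).card = k₁
  mu_count : ∀ (i : ι) (q : Q), ((blk i).filter fun x => proj x = q).Nonempty →
    (univ.filter fun j : ι =>
      (blk j).filter (fun x => proj x = q) = (blk i).filter fun x => proj x = q).card = μ
  eta_count : ∀ i : ι,
    (univ.filter fun j : ι =>
      (univ.filter fun q : Q => ((blk j).filter fun x => proj x = q).Nonempty) =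
        univ.filter fun q : Q => ((blk i).filter fun x => proj x = q).Nonempty).card = η

variable {P ι Q G : Type*} [Fintype P] [DecidableEq P] [Fintype ι] [Fintype Q]
  [DecidableEq Q] [Group G] [MulAction G P] [MulAction G ι] [MulAction G Q]

namespace Setting

variable (S : Setting P ι Q G)

/-- The trace of the block `i` on the class `q`, i.e. `B ∩ Δ`. -/
def fiberTrace (i : ι) (q : Q) : Finset P := (S.blk i).filter fun x => S.proj x = q

/-- The trace of the block `i` on `Σ`: the set of classes met by the block. -/
def trace (i : ι) : Finset Q := univ.filter fun q : Q => (S.fiberTrace i q).Nonempty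

/-- `A = gcd (k₁ − 1, v₁ − 1)`. -/
def A : ℕ := Nat.gcd (S.k₁ - 1) (S.v₁ - 1)

/-- `η₀ = gcd (η, v₀ / k₀)`. -/
def η₀ : ℕ := Nat.gcd S.η (S.v₀ / S.k₀)

/-- `η₁ = η / η₀`. -/
def η₁ : ℕ := S.η / S.η₀

/-- `r₁' = (v₀ / (k₀ η₀)) · ((v₀ − 1)/(k₀ − 1))`. -/
def r₁' : ℕ := S.v₀ / (S.k₀ * S.η₀) * ((S.v₀ - 1) / (S.k₀ - 1))

/-- **Hypothesis 1**: `λ` is a prime dividing `r`, `v ≤ 2λ²(λ−1)`, and the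
partition `Σ` is minimal (w.r.t. refinement) among the nontrivial `G`-invariant
partitions of the point set. -/
def Hyp1 : Prop :=
  S.lam.Prime ∧ S.lam ∣ S.r ∧ S.v ≤ 2 * S.lam ^ 2 * (S.lam - 1) ∧
    ∀ s : Setoid P,
      (∀ (g : G) (x y : P), s.r x y → s.r (g • x) (g • y)) →
      (∀ x y : P, s.r x y → S.proj x = S.proj y) →
      (∃ x y : P, x ≠ y ∧ s.r x y) →
      ∀ x y : P, s.r x y ↔ S.proj x = S.proj y

/-- The quotient structure `D₁` is a 2-design with parameters `(v₁, k₁, λ₁)`,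
where `λ₁ = v₀²λ/(k₀²η)`, with replication number `r₁ = (v₁−1)λ₁/(k₁−1)`:
any two distinct classes are met simultaneously by exactly `λ₁ · η` blocks. -/
def QuotientTwoDesign : Prop :=
  (∀ q q' : Q, q ≠ q' →
    (univ.filter fun i : ι => q ∈ S.trace i ∧ q' ∈ S.trace i).card = S.lam₁ * S.η) ∧
  S.lam₁ * (S.k₀ ^ 2 * S.η) = S.v₀ ^ 2 * S.lam ∧
  S.r₁ * (S.k₁ - 1) = S.lam₁ * (S.v₁ - 1)

/-- The quotient structure `D₁` is a symmetric 1-design with `k₁ = v₁ − 1`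
(in particular it has exactly `v₁` distinct blocks, namely the distinct traces). -/
def QuotientSymm1Design : Prop :=
  S.k₁ = S.v₁ - 1 ∧ (univ.image fun i : ι => S.trace i).card = S.v₁

/-- **Hypothesis 3/2**: Hypothesis 1 holds and `D₁` is a 2-`(v₁, k₁, λ₁)` design,
not a symmetric 1-design with `k₁ = v₁ − 1`. -/
def Hyp32 : Prop := S.Hyp1 ∧ S.QuotientTwoDesign ∧ ¬ S.QuotientSymm1Design

/-- **Hypothesis 2**: Hypothesis 3/2 holds, `r > k` and `λ > 3`. -/
def Hyp2 : Prop := S.Hyp32 ∧ S.k < S.r ∧ 3 < S.lam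

/-- `D₁` is of type I: `k₁ = (k₁, v₁) · (k₁, r/λ) · λ`. -/
def TypeI : Prop := S.k₁ = Nat.gcd S.k₁ S.v₁ * Nat.gcd S.k₁ (S.r / S.lam) * S.lam

/-- `D₁` is of type II: `k₁ = (k₁, v₁) · (k₁, r/λ)`. -/
def TypeII : Prop := S.k₁ = Nat.gcd S.k₁ S.v₁ * Nat.gcd S.k₁ (S.r / S.lam)

/-- `D₁` is of type Ia: type I, and `λ` divides none of `v₀(v₀−1)`, `v₁(v₁−1)`,
`v(v−1)`. -/
def TypeIa : Prop :=
  S.TypeI ∧ ¬ S.lam ∣ S.v₀ * (S.v₀ - 1) ∧ ¬ S.lam ∣ S.v₁ * (S.v₁ - 1) ∧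
    ¬ S.lam ∣ S.v * (S.v - 1)

/-- `D₁` is of type Ic: type I, and
`(v₀, k₀, v₁, k₁) = ((λ²+λ+2)/2, 2, (λ−1)(λ²−2)/2, λ²(λ−1)/4)`. -/
def TypeIc : Prop :=
  S.TypeI ∧ S.k₀ = 2 ∧ 2 * S.v₀ = S.lam ^ 2 + S.lam + 2 ∧
    2 * S.v₁ = (S.lam - 1) * (S.lam ^ 2 - 2) ∧ 4 * S.k₁ = S.lam ^ 2 * (S.lam - 1)

/-- `D₁` is of type IIb: type II and `λ > v₀`. -/
def TypeIIb : Prop := S.TypeII ∧ S.v₀ < S.lam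

/-- The permutation of the class `Δ = {x : P // proj x = q}` induced by an element
of the (setwise) stabiliser `G_Δ` of the class. -/
def classPerm (q : Q) (g : MulAction.stabilizer G q) :
    Equiv.Perm {x : P // S.proj x = q} where
  toFun x := ⟨(g : G) • (x : P), by
    rw [S.proj_equivariant, x.2]
    exact MulAction.mem_stabilizer_iff.mp g.2⟩
  invFun x := ⟨(g : G)⁻¹ • (x : P), by
    rw [S.proj_equivariant, x.2, inv_smul_eq_iff]
    exact (MulAction.mem_stabilizer_iff.mp g.2).symm⟩
  left_inv x := Subtype.ext (inv_smul_smul _ _)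
  right_inv x := Subtype.ext (smul_inv_smul _ _)

/-- The natural homomorphism from the stabiliser `G_Δ` of a class `Δ` of `Σ` to the
symmetric group on `Δ`; its range is the induced group `G_Δ^Δ`. -/
def classHom (q : Q) :
    MulAction.stabilizer G q →* Equiv.Perm {x : P // S.proj x = q} where
  toFun := S.classPerm q
  map_one' := by
    apply Equiv.ext
    intro x
    apply Subtype.ext
    show ((1 : MulAction.stabilizer G q) : G) • (x : P) = (x : P)
    simp
  map_mul' g h := by
    apply Equiv.ext
    intro x
    apply Subtype.ext
    show ((g * h : MulAction.stabilizer G q) : G) • (x : P) =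
      (g : G) • ((h : G) • (x : P))
    simp [mul_smul]

end Setting

section Incidence

variable {α β : Type*}

theorem card_le_card_of_pair_count [Fintype α] [DecidableEq α] [Fintype β]
    {blk : β → Finset α} {lam r : ℕ} (hpair : ∀ x y : α, x ≠ y → #{i | x ∈ blk i ∧ y ∈ blk i} = lam)
    (hrep : ∀ x : α, #{i | x ∈ blk i} = r) (hlt : lam < r) :
    Fintype.card α ≤ Fintype.card β := by
  let N : Matrix α β ℚ := Matrix.of fun x i => if x ∈ blk i then 1 else 0
  have hgram : N * N.transpose =
      ((r : ℚ) - lam) • (1 : Matrix α α ℚ) + (lam : ℚ) • Matrix.vecMulVec 1 (star 1) := by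
    ext x y
    simp only [Matrix.mul_apply, Matrix.transpose_apply, N, Matrix.of_apply, ite_mul, one_mul,
      zero_mul, ← ite_and, Finset.sum_boole]
    rcases eq_or_ne x y with rfl | hxy
    · simp [hrep]
    · simp [hpair x y hxy, hxy]
  have hpos : (N * N.transpose).PosDef := by
    rw [hgram]
    exact (Matrix.PosDef.one.smul (sub_pos.mpr (by exact_mod_cast hlt))).add_posSemidef
      ((Matrix.posSemidef_vecMulVec_self_star 1).smul (Nat.cast_nonneg lam))
  calc Fintype.card α = (N * N.transpose).rank := (Matrix.rank_of_isUnit _ hpos.isUnit).symm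
    _ ≤ N.rank := Matrix.rank_mul_le_left _ _
    _ ≤ Fintype.card β := Matrix.rank_le_card_width N

theorem rep_mul_eq_of_card_inter_eq [DecidableEq α] [Fintype β] {blk : β → Finset α}
    {T : Finset α} {x : α} {r lam c : ℕ} (hx : x ∈ T) (hrep : #{i | x ∈ blk i} = r)
    (hpair : ∀ y ∈ T, y ≠ x → #{i | x ∈ blk i ∧ y ∈ blk i} = lam)
    (hc : ∀ i, x ∈ blk i → #(blk i ∩ T) = c) :
    r * c = lam * (#T - 1) + r := by
  have hcount := sum_card_bipartiteAbove_eq_sum_card_bipartiteBelow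
    (s := {i | x ∈ blk i}) (t := T) (r := fun i y => y ∈ blk i)
  have habove : ∀ i ∈ ({i | x ∈ blk i} : Finset β),
      #(T.bipartiteAbove (fun i y => y ∈ blk i) i) = c := by
    intro i hi
    rw [bipartiteAbove, ← hc i (mem_filter.mp hi).2, inter_comm, filter_mem_eq_inter]
  have hbelow : ∀ y ∈ T,
      #(({i | x ∈ blk i} : Finset β).bipartiteBelow (fun i y => y ∈ blk i) y) =
        if y = x then r else lam := by
    intro y hy
    rw [bipartiteBelow, filter_filter]
    split_ifs with hyx
    · subst hyx; simpa using hrep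
    · exact hpair y hy hyx
  rw [sum_congr rfl habove, sum_congr rfl hbelow, sum_const, smul_eq_mul, ← add_sum_erase _ _ hx,
    if_pos rfl, sum_congr rfl fun y hy => if_neg (ne_of_mem_erase hy), sum_const, smul_eq_mul,
    card_erase_of_mem hx] at hcount
  simpa [hrep, add_comm, mul_comm] using hcount

end Incidence

theorem dvd_of_sq_dvd_sq_mul_prime {k v p : ℕ} (hp : p.Prime) (hv : v ≠ 0)
    (h : k ^ 2 ∣ v ^ 2 * p) : k ∣ v := by
  have hk : k ≠ 0 := by rintro rfl; simp [hv, hp.ne_zero] at h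
  rw [← Nat.factorization_le_iff_dvd hk hv]
  have hle := (Nat.factorization_le_iff_dvd (pow_ne_zero 2 hk)
    (mul_ne_zero (pow_ne_zero 2 hv) hp.ne_zero)).mpr h
  intro q
  have hq := hle q
  simp only [Nat.factorization_mul (pow_ne_zero 2 hv) hp.ne_zero, Nat.factorization_pow,
    Finsupp.add_apply, Finsupp.smul_apply, smul_eq_mul, hp.factorization,
    Finsupp.single_apply] at hq
  split_ifs at hq <;> omega

theorem coprime_of_mul_eq_mul_add_one {x a m b : ℕ} (h : x * a = m * b + 1) : x.Coprime m :=
  Nat.dvd_one.mp <| (Nat.dvd_add_right (dvd_mul_of_dvd_left (Nat.gcd_dvd_right x m) b)).mp <|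
    h ▸ dvd_mul_of_dvd_left (Nat.gcd_dvd_left x m) a

theorem eq_gcd_mul_of_mul_eq_mul {x m a b : ℕ} (hcop : x.Coprime m) (h : m * a = x * b) :
    a = Nat.gcd a b * x ∧ b = Nat.gcd a b * m := by
  constructor
  · calc a = Nat.gcd x m * a := by rw [hcop.gcd_eq_one, one_mul]
      _ = Nat.gcd (a * x) (b * x) := by rw [← Nat.gcd_mul_right, mul_comm b, ← h, mul_comm a]
      _ = Nat.gcd a b * x := Nat.gcd_mul_right a x b
  · calc b = Nat.gcd x m * b := by rw [hcop.gcd_eq_one, one_mul]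
      _ = Nat.gcd (a * m) (b * m) := by rw [← Nat.gcd_mul_right, mul_comm a, h, mul_comm b]
      _ = Nat.gcd a b * m := Nat.gcd_mul_right a m b

theorem exists_eq_of_mul_eq_mul_sub_one_add_one {a x m : ℕ} (ha : 2 ≤ a)
    (h : x * a = m * (a - 1) + 1) : ∃ z, x = z * (a - 1) + 1 ∧ m = z * a + 1 := by
  obtain ⟨c, rfl⟩ : ∃ c, a = c + 2 := ⟨a - 2, by omega⟩
  rw [show c + 2 - 1 = c + 1 by omega] at h ⊢
  obtain ⟨z, rfl⟩ : ∃ z, m = x + z := Nat.exists_eq_add_of_le (by nlinarith)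
  exact ⟨z, by nlinarith, by nlinarith⟩

theorem sub_one_mul_lt_of_mul_le {a A z lam : ℕ} (ha : 1 ≤ a)
    (h : a * (A * (z * (a - 1) + 1) + 1) ≤ lam * (z * a + 1)) : (a - 1) * A < lam := by
  obtain ⟨c, rfl⟩ : ∃ c, a = c + 1 := ⟨a - 1, by omega⟩
  simp only [Nat.add_sub_cancel] at h ⊢
  refine Nat.lt_of_mul_lt_mul_right (a := z * (c + 1) + 1) ?_
  nlinarith

theorem lt_or_eq_and_eq_one_of_sub_one_mul_lt {a A lam : ℕ} (ha : 2 ≤ a) (hA : 0 < A)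
    (h : (a - 1) * A < lam) : a < lam ∨ lam = a ∧ A = 1 := by
  rcases Nat.lt_or_ge 1 A with hA2 | hA1
  · have := Nat.mul_le_mul_left (a - 1) hA2
    omega
  · obtain rfl : A = 1 := by omega
    omega

namespace Setting

theorem nonempty_points (S : Setting P ι Q G) : Nonempty P := by
  rw [← Fintype.card_pos_iff, S.card_points]
  have := S.k_lt_v
  omega

variable (S : Setting P ι Q G)

theorem mem_trace {i : ι} {q : Q} : q ∈ S.trace i ↔ (S.fiberTrace i q).Nonempty := by
  simp [trace]

theorem card_fiberTrace_of_nonempty {i : ι} {q : Q} (h : (S.fiberTrace i q).Nonempty) :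
    #(S.fiberTrace i q) = S.k₀ :=
  (S.blk_fiber_card i q).resolve_left (card_ne_zero.mpr h)

theorem k₁_pos : 0 < S.k₁ := by
  have h := S.k₀_mul_k₁ ▸ S.two_lt_k
  exact Nat.pos_of_ne_zero fun h0 => by simp [h0] at h

theorem r_mul_k₀_eq (x : P) : S.r * S.k₀ = S.lam * (S.v₀ - 1) + S.r := by
  have h := rep_mul_eq_of_card_inter_eq (T := {y | S.proj y = S.proj x}) (by simp) (S.rep_count x)
    (fun y _ hyx => S.pair_count x y (Ne.symm hyx)) fun i hi => by
      rw [inter_filter, inter_univ]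
      exact S.card_fiberTrace_of_nonempty ⟨x, mem_filter.mpr ⟨hi, rfl⟩⟩
  rwa [S.fiber_card] at h

theorem r_mul_k_eq (x : P) : S.r * S.k = S.lam * (S.v - 1) + S.r := by
  have h := rep_mul_eq_of_card_inter_eq (T := univ) (mem_univ x) (S.rep_count x)
    (fun y _ hyx => S.pair_count x y (Ne.symm hyx)) fun i _ => by rw [inter_univ, S.blk_card]
  rwa [card_univ, S.card_points] at h

theorem b_mul_k_eq : S.b * S.k = S.v * S.r := by
  have h := card_mul_eq_card_mul (s := univ) (t := univ) (fun i x => x ∈ S.blk i)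
    (m := S.k) (n := S.r) (fun i _ => by simp [bipartiteAbove, S.blk_card])
    (fun x _ => by simp [bipartiteBelow, S.rep_count])
  rwa [card_univ, card_univ, S.card_blocks, S.card_points] at h

theorem lam_lt_r (hlam : 0 < S.lam) : S.lam < S.r := by
  obtain ⟨x⟩ := S.nonempty_points
  have h := S.r_mul_k_eq x
  have hkv := S.k_lt_v
  have hk := S.two_lt_k
  by_contra! hle
  have h1 := Nat.mul_le_mul_right (S.k - 1) hle
  have h2 := Nat.mul_lt_mul_of_pos_left (show S.k - 1 < S.v - 1 by omega) hlam
  rw [Nat.mul_sub_one] at h1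
  omega

theorem k_le_r (hlam : 0 < S.lam) : S.k ≤ S.r := by
  have hvb : S.v ≤ S.b := S.card_points ▸ S.card_blocks ▸
    card_le_card_of_pair_count S.pair_count S.rep_count (S.lam_lt_r hlam)
  have hv : 0 < S.v := by have := S.k_lt_v; omega
  refine Nat.le_of_mul_le_mul_left ?_ hv
  calc S.v * S.k ≤ S.b * S.k := Nat.mul_le_mul_right _ hvb
    _ = S.v * S.r := S.b_mul_k_eq

theorem card_trace_mem_mul_k₀ (q : Q) : #{i | q ∈ S.trace i} * S.k₀ = S.v₀ * S.r := by
  rw [← S.fiber_card q]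
  refine card_mul_eq_card_mul (fun i x => x ∈ S.blk i) (fun i hi => ?_) (fun x hx => ?_)
  · rw [← S.card_fiberTrace_of_nonempty (S.mem_trace.mp (mem_filter.mp hi).2)]
    congr 1
    ext y
    simp [bipartiteAbove, fiberTrace, and_comm]
  · rw [bipartiteBelow, filter_filter, ← S.rep_count x]
    congr 1
    ext i
    simp only [mem_filter, mem_univ, true_and, and_iff_right_iff_imp]
    exact fun hxi => S.mem_trace.mpr ⟨x, mem_filter.mpr ⟨hxi, (mem_filter.mp hx).2⟩⟩

theorem card_trace_mem_mul_k₁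
    (hQ1 : ∀ q q' : Q, q ≠ q' → #{i | q ∈ S.trace i ∧ q' ∈ S.trace i} = S.lam₁ * S.η)
    (q : Q) :
    #{i | q ∈ S.trace i} * S.k₁ = S.lam₁ * S.η * (S.v₁ - 1) + #{i | q ∈ S.trace i} := by
  have h := rep_mul_eq_of_card_inter_eq (blk := S.trace) (T := univ) (mem_univ q) rfl
    (fun q' _ hq' => hQ1 q q' (Ne.symm hq')) fun i _ => by rw [inter_univ]; exact S.trace_card i
  rwa [card_univ, S.card_classes] at h

theorem v₀_sub_one_eq (hlam : 0 < S.lam) {m : ℕ} (hm : S.r = S.lam * m) :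
    S.v₀ - 1 = m * (S.k₀ - 1) := by
  obtain ⟨x⟩ := S.nonempty_points
  have h := S.r_mul_k₀_eq x
  rw [hm] at h
  have h' : m * S.k₀ = S.v₀ - 1 + m :=
    Nat.eq_of_mul_eq_mul_left hlam (by rw [mul_add, ← mul_assoc]; exact h)
  rw [Nat.mul_sub_one]
  omega

theorem k₀_dvd_v₀ (hp : S.lam.Prime)
    (hQ2 : S.lam₁ * (S.k₀ ^ 2 * S.η) = S.v₀ ^ 2 * S.lam) : S.k₀ ∣ S.v₀ :=
  dvd_of_sq_dvd_sq_mul_prime hp (by have := S.one_lt_v₀; omega)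
    ⟨S.lam₁ * S.η, by rw [← hQ2]; ring⟩

theorem mul_k₁_sub_one_eq (hlam : 0 < S.lam)
    (hQ1 : ∀ q q' : Q, q ≠ q' → #{i | q ∈ S.trace i ∧ q' ∈ S.trace i} = S.lam₁ * S.η)
    (hQ2 : S.lam₁ * (S.k₀ ^ 2 * S.η) = S.v₀ ^ 2 * S.lam) {m x : ℕ} (hm : S.r = S.lam * m)
    (hx : S.v₀ = S.k₀ * x) : m * (S.k₁ - 1) = x * (S.v₁ - 1) := by
  obtain ⟨p⟩ := S.nonempty_points
  have hk₀ : 0 < S.k₀ := by have := S.two_le_k₀; omega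
  have hx₀ : 0 < x := Nat.pos_of_ne_zero fun h0 => by
    have := S.one_lt_v₀
    rw [h0, mul_zero] at hx
    omega
  have hN : #{i | S.proj p ∈ S.trace i} = x * (S.lam * m) :=
    Nat.eq_of_mul_eq_mul_right hk₀ (by rw [S.card_trace_mem_mul_k₀, hx, hm]; ring)
  have hlam₁ : S.lam₁ * S.η = S.lam * x ^ 2 :=
    Nat.eq_of_mul_eq_mul_left (pow_pos hk₀ 2) <| by
      calc S.k₀ ^ 2 * (S.lam₁ * S.η) = S.v₀ ^ 2 * S.lam := by rw [← hQ2]; ring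
        _ = S.k₀ ^ 2 * (S.lam * x ^ 2) := by rw [hx]; ring
  have h := S.card_trace_mem_mul_k₁ hQ1 (S.proj p)
  rw [hN, hlam₁] at h
  obtain ⟨c, hc⟩ : ∃ c, S.k₁ = c + 1 := ⟨S.k₁ - 1, by have := S.k₁_pos; omega⟩
  rw [hc] at h ⊢
  refine Nat.eq_of_mul_eq_mul_left (Nat.mul_pos hlam hx₀) ?_
  simp only [Nat.add_sub_cancel]
  linarith

end Setting

/-- Proposition 3.6 of the paper. Assume Hypothesis 3/2, and set
`A = gcd (k₁−1, v₁−1)`.  Then there is `z ≥ 1` with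
`v₀ = (z(k₀−1)+1)·k₀`, `(v₀−1)/(k₀−1) = z·k₀+1`,
`k₁ = A(z(k₀−1)+1)+1` and `v₁ = A(zk₀+1)+1` (equivalently `k₁−1 = A·(v₀/k₀)` and
`v₁−1 = A·(v₀−1)/(k₀−1)`); moreover `λ ≥ (k₀−1)A+1`, and in particular either
`λ > k₀` or `λ = k₀` and `A = 1`. -/
theorem statement_7 (S : Setting P ι Q G) (h : S.Hyp32) :
    ∃ z : ℕ, 1 ≤ z ∧
      S.v₀ = (z * (S.k₀ - 1) + 1) * S.k₀ ∧
      S.v₀ - 1 = (z * S.k₀ + 1) * (S.k₀ - 1) ∧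
      S.k₁ = S.A * (z * (S.k₀ - 1) + 1) + 1 ∧
      S.v₁ = S.A * (z * S.k₀ + 1) + 1 ∧
      S.k₁ - 1 = S.A * (S.v₀ / S.k₀) ∧
      S.v₁ - 1 = S.A * ((S.v₀ - 1) / (S.k₀ - 1)) ∧
      (S.k₀ - 1) * S.A + 1 ≤ S.lam ∧
      (S.k₀ < S.lam ∨ (S.lam = S.k₀ ∧ S.A = 1)) := by
  obtain ⟨⟨hp, ⟨m, hm⟩, -, -⟩, ⟨hQ1, hQ2, -⟩, -⟩ := h
  have hk₀ := S.two_le_k₀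
  have hk₁ := S.k₁_pos
  have hv₁ := S.one_lt_v₁
  obtain ⟨x, hx⟩ := S.k₀_dvd_v₀ hp hQ2
  have hv₀ := S.v₀_sub_one_eq hp.pos hm
  have hxm : x * S.k₀ = m * (S.k₀ - 1) + 1 := by
    have := S.one_lt_v₀
    rw [mul_comm, ← hx]
    omega
  have hA : S.k₁ - 1 = S.A * x ∧ S.v₁ - 1 = S.A * m :=
    eq_gcd_mul_of_mul_eq_mul (coprime_of_mul_eq_mul_add_one hxm)
      (S.mul_k₁_sub_one_eq hp.pos hQ1 hQ2 hm hx)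
  have hA₀ : 0 < S.A := Nat.gcd_pos_of_pos_right _ (by omega)
  obtain ⟨z, rfl, rfl⟩ := exists_eq_of_mul_eq_mul_sub_one_add_one hk₀ hxm
  have hz : 1 ≤ z := Nat.pos_of_ne_zero <| by
    rintro rfl
    simpa [hm] using S.lam_lt_r hp.pos
  have hlam : (S.k₀ - 1) * S.A < S.lam := by
    refine sub_one_mul_lt_of_mul_le (z := z) (by omega) ?_
    rw [← hA.1, Nat.sub_add_cancel hk₁, S.k₀_mul_k₁, ← hm]
    exact S.k_le_r hp.pos
  refine ⟨z, hz, hx.trans (mul_comm _ _), hv₀, by omega, by omega, ?_, ?_, hlam,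
    lt_or_eq_and_eq_one_of_sub_one_mul_lt hk₀ hA₀ hlam⟩
  · rw [hx, Nat.mul_div_cancel_left _ (by omega)]
    exact hA.1
  · rw [hv₀, Nat.mul_div_cancel _ (by omega)]
    exact hA.2

end FlagTransitivePaper
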